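/- Fix n ≥ 2 and suppose W = W₁W₀aW₁ and W' = V₁V₀bV₁ are words of the same length, where a and b are single letters, W₁ and V₁ are instances of Z_{n−1}, and W₁ (respectively V₁) has minimal length among all decompositions of W₁W₀W₁ (respectively V₁V₀V₁) of the form (prefix = suffix = a Z_{n−1}-instance, shorter than half the word). If W = W', then W₁ = V₁, W₀ = V₀, and a = b. Consequently, the map sending a Zₙ-instance of length M together with a letter from a q-letter alphabet to the word W₁W₀aW₁ (obtained from the minimal decomposition W = W₁W₀W₁) is an injection from C(n,q,M) × alphabet into C(n,q,M+1). -/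

import Mathlib

/-!
If two extensions `W₁W₀aW₁ = V₁V₀bV₁` of minimal decompositions coincide and `|W₁| ≤ |V₁|`,
then `W₁` is both a prefix and a suffix of `V₁`, hence a border of `V₁V₀V₁` that is a
`Z_{n−1}`-instance shorter than half of it; minimality of `V₁` forces `|W₁| = |V₁|`, so `W₁ = V₁`
and cancelling gives `W₀ = V₀` and `a = b`. The extension `W₁W₀aW₁` of a `Zₙ`-instance is again a
`Zₙ`-instance: send the middle letter of `Zₙ` to `W₀a`.
-/

/-- `W` is an instance of the pattern `V`: the image of `V` under a semigroup
homomorphism sending each letter to a nonempty word. -/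
def IsInst {α β : Type} (V : List α) (W : List β) : Prop :=
  ∃ φ : α → List β, (∀ a ∈ V, φ a ≠ []) ∧ W = (V.map φ).flatten

/-- `U` encounters `V`: some contiguous subword (infix) of `U` is an instance of `V`. -/
def Encounters {α β : Type} (U : List β) (V : List α) : Prop :=
  ∃ W : List β, W <:+: U ∧ IsInst V W

/-- `U` avoids `V`: `U` does not encounter `V`. -/
def Avoids {α β : Type} (U : List β) (V : List α) : Prop :=
  ¬ Encounters U V

/-- The Zimin words over the alphabet ℕ: `Z₀ = ε`, `Z_{n+1} = Zₙ · n · Zₙ`. -/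
def Zimin : ℕ → List ℕ
  | 0 => []
  | n + 1 => Zimin n ++ n :: Zimin n

/-- `zimf n q` is the smallest `M` such that every `q`-ary word of length `M`
encounters the Zimin word `Zₙ`. -/
noncomputable def zimf (n q : ℕ) : ℕ :=
  sInf {M : ℕ | ∀ W : List (Fin q), W.length = M → Encounters W (Zimin n)}

/-- `ZC n q M` is the set of `q`-ary words of length `M` that are instances of `Zₙ`. -/
def ZC (n q M : ℕ) : Set (List (Fin q)) :=
  {W | W.length = M ∧ IsInst (Zimin n) W}

theorem lt_of_mem_zimin {m a : ℕ} (h : a ∈ Zimin m) : a < m := by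
  induction m with
  | zero => simp [Zimin] at h
  | succ k ih =>
    simp only [Zimin, List.mem_append, List.mem_cons] at h
    rcases h with h | rfl | h
    · exact (ih h).trans (Nat.lt_succ_self k)
    · exact Nat.lt_succ_self _
    · exact (ih h).trans (Nat.lt_succ_self k)

theorem isInst_zimin_succ_iff {β : Type} {m : ℕ} {W : List β} :
    IsInst (Zimin (m + 1)) W ↔
      ∃ W₁ X, IsInst (Zimin m) W₁ ∧ X ≠ [] ∧ W = W₁ ++ X ++ W₁ := by
  constructor
  · rintro ⟨φ, hne, rfl⟩
    exact ⟨((Zimin m).map φ).flatten, φ m, ⟨φ, fun a ha => hne a (by simp [Zimin, ha]), rfl⟩,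
      hne m (by simp [Zimin]), by simp [Zimin]⟩
  · rintro ⟨W₁, X, ⟨φ, hne, rfl⟩, hX, rfl⟩
    have hmap : (Zimin m).map (Function.update φ m X) = (Zimin m).map φ :=
      List.map_congr_left fun a ha => Function.update_of_ne (lt_of_mem_zimin ha).ne _ _
    refine ⟨Function.update φ m X, fun a ha => ?_, by simp [Zimin, hmap]⟩
    by_cases ham : a = m
    · simpa [ham] using hX
    · rw [Function.update_of_ne ham]
      simp only [Zimin, List.mem_append, List.mem_cons] at ha
      exact hne a (by tauto)

theorem exists_eq_append_append_of_prefix_of_suffix {α : Type} {B T : List α}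
    (hp : B <+: T) (hs : B <:+ T) (hl : 2 * B.length ≤ T.length) : ∃ U, T = B ++ U ++ B := by
  obtain ⟨r, rfl⟩ := hp
  have hr : B.length ≤ r.length := by simp only [List.length_append] at hl; omega
  obtain ⟨U, rfl⟩ := List.suffix_of_suffix_length_le hs (List.suffix_append B r) hr
  exact ⟨U, (List.append_assoc _ _ _).symm⟩

theorem prefix_and_suffix_append_cons {α : Type} (W₁ W₀ : List α) (a : α) :
    W₁ <+: W₁ ++ W₀ ++ a :: W₁ ∧ W₁ <:+ W₁ ++ W₀ ++ a :: W₁ :=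
  ⟨(List.prefix_append W₁ W₀).trans (List.prefix_append _ _), ⟨W₁ ++ W₀ ++ [a], by simp⟩⟩

section MinimalDecomposition

variable {α : Type} (P : List α → Prop)

def IsMinimalDecomposition (T W₁ W₀ : List α) : Prop :=
  P W₁ ∧ T = W₁ ++ W₀ ++ W₁ ∧ 2 * W₁.length < T.length ∧
    ∀ U₁ U₀, P U₁ → 2 * U₁.length < T.length → U₁ ++ U₀ ++ U₁ = T → W₁.length ≤ U₁.length

variable {P}

theorem exists_isMinimalDecomposition {T : List α}
    (h : ∃ W₁ W₀, P W₁ ∧ T = W₁ ++ W₀ ++ W₁ ∧ 2 * W₁.length < T.length) :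
    ∃ W₁ W₀, IsMinimalDecomposition P T W₁ W₀ := by
  classical
  have hQ : ∃ k, ∃ W₁ W₀, P W₁ ∧ T = W₁ ++ W₀ ++ W₁ ∧ 2 * W₁.length < T.length ∧
      W₁.length = k :=
    let ⟨W₁, W₀, hP, hT, hlt⟩ := h
    ⟨_, W₁, W₀, hP, hT, hlt, rfl⟩
  obtain ⟨W₁, W₀, hP, hT, hlt, hk⟩ := Nat.find_spec hQ
  exact ⟨W₁, W₀, hP, hT, hlt, fun U₁ U₀ hU hUlt hUT =>
    hk ▸ Nat.find_min' hQ ⟨U₁, U₀, hU, hUT.symm, hUlt, rfl⟩⟩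

theorem IsMinimalDecomposition.length_le_of_prefix_of_suffix {T V₁ V₀ B : List α}
    (hV : IsMinimalDecomposition P T V₁ V₀) (hB : P B) (hp : B <+: V₁) (hs : B <:+ V₁) :
    V₁.length ≤ B.length := by
  obtain ⟨-, rfl, hlt, hmin⟩ := hV
  have hBV := hp.length_le
  obtain ⟨U, hU⟩ := exists_eq_append_append_of_prefix_of_suffix
    (hp.trans ((List.prefix_append V₁ V₀).trans (List.prefix_append _ V₁)))
    (hs.trans (List.suffix_append (V₁ ++ V₀) V₁)) (by omega)
  exact hmin B U hB (by omega) hU.symm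

theorem IsMinimalDecomposition.length_le_of_append_cons_eq {W₁ W₀ V₁ V₀ : List α} {a b : α}
    (hV : IsMinimalDecomposition P (V₁ ++ V₀ ++ V₁) V₁ V₀) (hW : P W₁)
    (heq : W₁ ++ W₀ ++ a :: W₁ = V₁ ++ V₀ ++ b :: V₁) (hle : W₁.length ≤ V₁.length) :
    V₁.length ≤ W₁.length := by
  obtain ⟨hpW, hsW⟩ := prefix_and_suffix_append_cons W₁ W₀ a
  obtain ⟨hpV, hsV⟩ := prefix_and_suffix_append_cons V₁ V₀ b
  rw [heq] at hpW hsW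
  exact hV.length_le_of_prefix_of_suffix hW (List.prefix_of_prefix_length_le hpW hpV hle)
    (List.suffix_of_suffix_length_le hsW hsV hle)

theorem IsMinimalDecomposition.eq_of_append_cons_eq {W₁ W₀ V₁ V₀ : List α} {a b : α}
    (hW : IsMinimalDecomposition P (W₁ ++ W₀ ++ W₁) W₁ W₀)
    (hV : IsMinimalDecomposition P (V₁ ++ V₀ ++ V₁) V₁ V₀)
    (heq : W₁ ++ W₀ ++ a :: W₁ = V₁ ++ V₀ ++ b :: V₁) :
    W₁ = V₁ ∧ W₀ = V₀ ∧ a = b := by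
  have hlen : W₁.length = V₁.length := by
    rcases le_total W₁.length V₁.length with h | h
    · exact h.antisymm (hV.length_le_of_append_cons_eq hW.1 heq h)
    · exact (hW.length_le_of_append_cons_eq hV.1 heq.symm h).antisymm h
  have hsW := (prefix_and_suffix_append_cons W₁ W₀ a).2
  rw [heq] at hsW
  obtain rfl : W₁ = V₁ := (List.suffix_of_suffix_length_le hsW
    (prefix_and_suffix_append_cons V₁ V₀ b).2 hlen.le).eq_of_length hlen
  have heq' : W₀ ++ a :: W₁ = V₀ ++ b :: W₁ := by simpa using heq
  obtain ⟨rfl, hab⟩ := List.append_inj' heq' rfl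
  exact ⟨rfl, rfl, List.head_eq_of_cons_eq hab⟩

end MinimalDecomposition

theorem exists_isMinimalDecomposition_of_isInst_zimin_succ {β : Type} {m : ℕ} {W : List β}
    (h : IsInst (Zimin (m + 1)) W) :
    ∃ W₁ W₀, IsMinimalDecomposition (IsInst (Zimin m)) W W₁ W₀ := by
  obtain ⟨W₁, X, hW₁, hX, hW⟩ := isInst_zimin_succ_iff.1 h
  refine exists_isMinimalDecomposition ⟨W₁, X, hW₁, hW, ?_⟩
  have hXpos := List.length_pos_iff.2 hX
  simp only [hW, List.length_append]
  omega

theorem zimin_instance_extension_injective_general (n q M : ℕ) (hn : 2 ≤ n) :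
    (∀ (W₁ W₀ V₁ V₀ : List (Fin q)) (a b : Fin q),
      IsInst (Zimin (n - 1)) W₁ →
      2 * W₁.length < (W₁ ++ W₀ ++ W₁).length →
      (∀ U₁ U₀ : List (Fin q), IsInst (Zimin (n - 1)) U₁ →
        2 * U₁.length < (W₁ ++ W₀ ++ W₁).length →
        U₁ ++ U₀ ++ U₁ = W₁ ++ W₀ ++ W₁ → W₁.length ≤ U₁.length) →
      IsInst (Zimin (n - 1)) V₁ →
      2 * V₁.length < (V₁ ++ V₀ ++ V₁).length →
      (∀ U₁ U₀ : List (Fin q), IsInst (Zimin (n - 1)) U₁ →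
        2 * U₁.length < (V₁ ++ V₀ ++ V₁).length →
        U₁ ++ U₀ ++ U₁ = V₁ ++ V₀ ++ V₁ → V₁.length ≤ U₁.length) →
      W₁ ++ W₀ ++ a :: W₁ = V₁ ++ V₀ ++ b :: V₁ →
      W₁ = V₁ ∧ W₀ = V₀ ∧ a = b) ∧
    ∃ F : ZC n q M × Fin q → ZC n q (M + 1),
      Function.Injective F ∧
      ∀ p : ZC n q M × Fin q, ∃ W₁ W₀ : List (Fin q),
        IsInst (Zimin (n - 1)) W₁ ∧
        (p.1 : List (Fin q)) = W₁ ++ W₀ ++ W₁ ∧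
        2 * W₁.length < M ∧
        (∀ U₁ U₀ : List (Fin q), IsInst (Zimin (n - 1)) U₁ →
          2 * U₁.length < M →
          U₁ ++ U₀ ++ U₁ = (p.1 : List (Fin q)) → W₁.length ≤ U₁.length) ∧
        (F p : List (Fin q)) = W₁ ++ W₀ ++ p.2 :: W₁ := by
  obtain ⟨m, rfl⟩ : ∃ m, n = m + 1 := ⟨n - 1, by omega⟩
  simp only [Nat.add_sub_cancel]
  refine ⟨fun W₁ W₀ V₁ V₀ a b hW hWlt hWmin hV hVlt hVmin heq =>
    IsMinimalDecomposition.eq_of_append_cons_eq ⟨hW, rfl, hWlt, hWmin⟩ ⟨hV, rfl, hVlt, hVmin⟩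
      heq, ?_⟩
  choose W₁ W₀ hmin using fun W : ZC (m + 1) q M =>
    exists_isMinimalDecomposition_of_isInst_zimin_succ W.2.2
  have hlenM (W : ZC (m + 1) q M) : (W : List (Fin q)).length = M := W.2.1
  refine ⟨fun p => ⟨W₁ p.1 ++ W₀ p.1 ++ p.2 :: W₁ p.1, ?_, ?_⟩, fun p p' hpp' => ?_, fun p => ?_⟩
  · have hlen := congrArg List.length (hmin p.1).2.1
    simp only [hlenM, List.length_append, List.length_cons] at hlen ⊢
    omega
  · exact isInst_zimin_succ_iff.2 ⟨W₁ p.1, W₀ p.1 ++ [p.2], (hmin p.1).1, by simp, by simp⟩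
  · have hW := hmin p.1
    have hW' := hmin p'.1
    rw [hW.2.1] at hW
    rw [hW'.2.1] at hW'
    obtain ⟨h₁, h₀, hc⟩ := hW.eq_of_append_cons_eq hW' (congrArg Subtype.val hpp')
    exact Prod.ext (Subtype.ext (by rw [(hmin p.1).2.1, (hmin p'.1).2.1, h₁, h₀])) hc
  · obtain ⟨hW, hT, hlt, hle⟩ := hmin p.1
    rw [hlenM] at hlt hle
    exact ⟨W₁ p.1, W₀ p.1, hW, hT, hlt, hle, rfl⟩

/-- Fix `n ≥ 2`. If `W₁W₀aW₁ = V₁V₀bV₁` where `a, b` are single letters, `W₁, V₁` are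
instances of `Z_{n−1}` and `W₁` (resp. `V₁`) has minimal length among all decompositions
of `W₁W₀W₁` (resp. `V₁V₀V₁`) as (prefix = suffix = a `Z_{n−1}`-instance shorter than half
the word), then `W₁ = V₁`, `W₀ = V₀` and `a = b`.  Consequently, the map sending a
`Zₙ`-instance of length `M` (with minimal decomposition `W₁W₀W₁`) and a letter `c` of a
`q`-letter alphabet to `W₁W₀cW₁` is an injection `C(n,q,M) × alphabet → C(n,q,M+1)`. -/
theorem zimin_instance_extension_injective (n q M : ℕ) (hn : 2 ≤ n) (hq : 1 ≤ q)
    (hM : 1 ≤ M) :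
    (∀ (W₁ W₀ V₁ V₀ : List (Fin q)) (a b : Fin q),
      IsInst (Zimin (n - 1)) W₁ →
      2 * W₁.length < (W₁ ++ W₀ ++ W₁).length →
      (∀ U₁ U₀ : List (Fin q), IsInst (Zimin (n - 1)) U₁ →
        2 * U₁.length < (W₁ ++ W₀ ++ W₁).length →
        U₁ ++ U₀ ++ U₁ = W₁ ++ W₀ ++ W₁ → W₁.length ≤ U₁.length) →
      IsInst (Zimin (n - 1)) V₁ →
      2 * V₁.length < (V₁ ++ V₀ ++ V₁).length →
      (∀ U₁ U₀ : List (Fin q), IsInst (Zimin (n - 1)) U₁ →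
        2 * U₁.length < (V₁ ++ V₀ ++ V₁).length →
        U₁ ++ U₀ ++ U₁ = V₁ ++ V₀ ++ V₁ → V₁.length ≤ U₁.length) →
      W₁ ++ W₀ ++ a :: W₁ = V₁ ++ V₀ ++ b :: V₁ →
      W₁ = V₁ ∧ W₀ = V₀ ∧ a = b) ∧
    ∃ F : ZC n q M × Fin q → ZC n q (M + 1),
      Function.Injective F ∧
      ∀ p : ZC n q M × Fin q, ∃ W₁ W₀ : List (Fin q),
        IsInst (Zimin (n - 1)) W₁ ∧
        (p.1 : List (Fin q)) = W₁ ++ W₀ ++ W₁ ∧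
        2 * W₁.length < M ∧
        (∀ U₁ U₀ : List (Fin q), IsInst (Zimin (n - 1)) U₁ →
          2 * U₁.length < M →
          U₁ ++ U₀ ++ U₁ = (p.1 : List (Fin q)) → W₁.length ≤ U₁.length) ∧
        (F p : List (Fin q)) = W₁ ++ W₀ ++ p.2 :: W₁ :=
  zimin_instance_extension_injective_general n q M hn
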